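/- arXiv:1105.6022 — 2 statements merged into one kernel-verified Lean document; each statement's English description precedes it below -/
import Mathlib

section
/- For every f ∈ L^p_B(Ω), the Bochner integral defining P_t f converges for every t > 0, the map t ↦ P_t f is infinitely differentiable from (0,∞) into L^p_B(Ω), and for every integer m ≥ 1 there is a constant C_m > 0, independent of f, t and the family (T_u), such that ‖(d^m/dt^m) P_t f‖_{L^p_B(Ω)} ≤ C_m · t^{−m} · ‖f‖_{L^p_B(Ω)} for all t > 0. -/
open MeasureTheory Set
open scoped ENNReal

/-- The subordinated Poisson family
`P_t f = (t/(2√π)) ∫₀^∞ u^{−3/2} e^{−t²/(4u)} T_u f du` (a Bochner integral),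
for a family `T : ℝ → X` (here `T u` stands for `T_u f`). -/
noncomputable def subPoisson {X : Type*} [NormedAddCommGroup X] [NormedSpace ℝ X]
    (T : ℝ → X) (t : ℝ) : X :=
  (t / (2 * Real.sqrt Real.pi)) •
    ∫ u in Ioi (0 : ℝ), (u ^ (-(3 : ℝ) / 2) * Real.exp (-t ^ 2 / (4 * u))) • T u

lemma kernel_contOn {r c : ℝ} : ContinuousOn (fun u : ℝ => u ^ r * Real.exp (-c / u)) (Ioi (0:ℝ)) := by
  have h1 : ContinuousOn (fun u : ℝ => -c / u) (Ioi (0:ℝ)) :=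
    continuousOn_const.div continuousOn_id (fun u hu => ne_of_gt hu)
  exact ContinuousOn.mul
    (fun u hu => (Real.continuousAt_rpow_const u r (Or.inl (ne_of_gt hu))).continuousWithinAt)
    (Real.continuous_exp.comp_continuousOn h1)

lemma kernel_nonneg {r c : ℝ} {u : ℝ} (hu : (0:ℝ) < u) : 0 ≤ u ^ r * Real.exp (-c / u) :=
  mul_nonneg (Real.rpow_nonneg hu.le r) (Real.exp_nonneg _)

/-- integrability of the scalar kernel `u ^ r * exp (-c/u)` on `(0,∞)`. -/
lemma kernel_integrable {r c : ℝ} (hr : r < -1) (hc : 0 < c) :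
    IntegrableOn (fun u : ℝ => u ^ r * Real.exp (-c / u)) (Ioi (0:ℝ)) := by
  rw [← Ioc_union_Ioi_eq_Ioi (zero_le_one (α := ℝ))]
  refine IntegrableOn.union ?_ ?_
  · -- on (0,1]: bounded
    obtain ⟨N, hN⟩ := exists_nat_gt (-r)
    have hconst : IntegrableOn (fun _ : ℝ => (N.factorial : ℝ) / c ^ N) (Ioc (0:ℝ) 1) :=
      integrableOn_const measure_Ioc_lt_top.ne
    refine hconst.mono' ((kernel_contOn.mono Ioc_subset_Ioi_self).aestronglyMeasurable
      measurableSet_Ioc) ?_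
    filter_upwards [ae_restrict_mem measurableSet_Ioc] with u hu
    have hu0 : (0:ℝ) < u := hu.1
    rw [Real.norm_eq_abs, abs_of_nonneg (kernel_nonneg hu0)]
    have hexp : Real.exp (-c / u) ≤ N.factorial * (u ^ N / c ^ N) := by
      have h2 : (c / u) ^ N / N.factorial ≤ Real.exp (c / u) :=
        Real.pow_div_factorial_le_exp (c/u) (by positivity) N
      have h3 : Real.exp (-c / u) = (Real.exp (c / u))⁻¹ := by
        rw [← Real.exp_neg]; ring_nf
    -- exp(-c/u) = exp(c/u)⁻¹ ≤ ((c/u)^N / N!)⁻¹ = N! u^N / c^N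
      rw [h3]
      have h4 : (0:ℝ) < (c / u) ^ N / N.factorial := by positivity
      calc (Real.exp (c/u))⁻¹ ≤ ((c / u) ^ N / N.factorial)⁻¹ :=
            inv_anti₀ h4 h2
        _ = N.factorial * (u ^ N / c ^ N) := by
            rw [div_pow]; field_simp
    calc u ^ r * Real.exp (-c/u) ≤ u ^ r * (N.factorial * (u ^ N / c ^ N)) :=
          mul_le_mul_of_nonneg_left hexp (Real.rpow_nonneg hu0.le r)
      _ = (u ^ r * u ^ (N:ℝ)) * (N.factorial / c ^ N) := by
          rw [Real.rpow_natCast]; ring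
      _ = u ^ (r + N) * (N.factorial / c ^ N) := by rw [Real.rpow_add hu0]
      _ ≤ 1 * (N.factorial / c ^ N) := by
          refine mul_le_mul_of_nonneg_right ?_ (by positivity)
          exact Real.rpow_le_one hu0.le hu.2 (by linarith)
      _ = N.factorial / c ^ N := one_mul _
  · -- on (1,∞)
    refine (integrableOn_Ioi_rpow_of_lt hr one_pos).mono' ?_ ?_
    · exact (kernel_contOn.mono (Ioi_subset_Ioi zero_le_one)).aestronglyMeasurable measurableSet_Ioi
    · filter_upwards [ae_restrict_mem measurableSet_Ioi] with u hu
      have hu0 : (0:ℝ) < u := lt_trans zero_lt_one hu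
      rw [Real.norm_eq_abs, abs_of_nonneg (kernel_nonneg hu0)]
      calc u ^ r * Real.exp (-c/u) ≤ u ^ r * 1 := by
            refine mul_le_mul_of_nonneg_left ?_ (Real.rpow_nonneg hu0.le r)
            exact Real.exp_le_one_iff.mpr (by rw [neg_div]; exact neg_nonpos.mpr (div_pos hc hu0).le)
        _ ≤ u ^ r := le_of_eq (mul_one _)

noncomputable def Cc (r : ℝ) : ℝ := ∫ u in Ioi (0:ℝ), u ^ r * Real.exp (-(1/4) / u)

lemma Cc_nonneg (r : ℝ) : 0 ≤ Cc r :=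
  setIntegral_nonneg measurableSet_Ioi (fun _ hu => kernel_nonneg hu)

lemma kernel_integral_scaling {r t : ℝ} (hr : r < -1) (ht : 0 < t) :
    ∫ u in Ioi (0:ℝ), u ^ r * Real.exp (-(t^2/4) / u) = t ^ (2*r+2) * Cc r := by
  have ht2 : (0:ℝ) < t^2 := by positivity
  have key := integral_comp_mul_left_Ioi (fun u => u ^ r * Real.exp (-(t^2/4) / u)) 0 ht2
  rw [mul_zero] at key
  have hcong : ∀ x ∈ Ioi (0:ℝ),
      (t^2*x) ^ r * Real.exp (-(t^2/4) / (t^2*x))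
        = t ^ (2*r) * (x ^ r * Real.exp (-(1/4) / x)) := by
    intro x hx
    have hx0 : (0:ℝ) < x := hx
    rw [Real.mul_rpow (sq_nonneg t) hx0.le]
    have h1 : (t^2 : ℝ) ^ r = t ^ (2*r) := by
      rw [← Real.rpow_natCast t 2, ← Real.rpow_mul ht.le]
      norm_num
    have h2 : -(t^2/4) / (t^2*x) = -(1/4) / x := by
      rw [← div_div]
      congr 1
      field_simp
    rw [h1, h2]; ring
  rw [setIntegral_congr_fun measurableSet_Ioi hcong, integral_const_mul] at key
  have key2 : t ^ (2*r) * Cc r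
      = (t^2)⁻¹ * ∫ u in Ioi (0:ℝ), u ^ r * Real.exp (-(t^2/4) / u) := by
    simpa [Cc, smul_eq_mul] using key
  have hI : (∫ u in Ioi (0:ℝ), u ^ r * Real.exp (-(t^2/4) / u))
      = t^2 * (t ^ (2*r) * Cc r) := by
    rw [key2]; field_simp
  have hpow : t ^ (2*r+2) = t ^ (2*r) * t^(2:ℕ) := by
    rw [Real.rpow_add ht]
    congr 1
    rw [← Real.rpow_natCast t 2]; norm_num
  rw [hI, hpow]; ring

section Vec

variable {X : Type*} [NormedAddCommGroup X] [NormedSpace ℝ X] [CompleteSpace X]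
variable {T' : ℝ → X} {M : ℝ}

/-- the basic family of integrals `G r t = ∫_{(0,∞)} u^r e^{-t²/(4u)} • T' u du`,
written with exponent `-(t²/4)/u`. -/
noncomputable def Gfam (T' : ℝ → X) (r t : ℝ) : X :=
  ∫ u in Ioi (0:ℝ), (u ^ r * Real.exp (-(t^2/4) / u)) • T' u

lemma vec_contOn (hT : ContinuousOn T' (Ioi (0:ℝ))) {r c : ℝ} :
    ContinuousOn (fun u : ℝ => (u ^ r * Real.exp (-c / u)) • T' u) (Ioi (0:ℝ)) :=
  ContinuousOn.smul kernel_contOn hT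

lemma vec_integrable (hT : ContinuousOn T' (Ioi (0:ℝ)))
    (hM : ∀ u ∈ Ioi (0:ℝ), ‖T' u‖ ≤ M) {r c : ℝ} (hr : r < -1) (hc : 0 < c) :
    IntegrableOn (fun u : ℝ => (u ^ r * Real.exp (-c / u)) • T' u) (Ioi (0:ℝ)) := by
  refine ((kernel_integrable hr hc).const_mul M).mono'
    ((vec_contOn hT).aestronglyMeasurable measurableSet_Ioi) ?_
  filter_upwards [ae_restrict_mem measurableSet_Ioi] with u hu
  rw [norm_smul, Real.norm_eq_abs, abs_of_nonneg (kernel_nonneg hu)]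
  calc (u ^ r * Real.exp (-c/u)) * ‖T' u‖ ≤ (u ^ r * Real.exp (-c/u)) * M :=
        mul_le_mul_of_nonneg_left (hM u hu) (kernel_nonneg hu)
    _ = M * (u ^ r * Real.exp (-c/u)) := mul_comm _ _

lemma Gfam_norm_le (hT : ContinuousOn T' (Ioi (0:ℝ)))
    (hM : ∀ u ∈ Ioi (0:ℝ), ‖T' u‖ ≤ M) (hM0 : 0 ≤ M) {r t : ℝ} (hr : r < -1) (ht : 0 < t) :
    ‖Gfam T' r t‖ ≤ M * Cc r * t ^ (2*r+2) := by
  have hc : (0:ℝ) < t^2/4 := by positivity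
  have hbd : ‖Gfam T' r t‖ ≤ ∫ u in Ioi (0:ℝ), M * (u ^ r * Real.exp (-(t^2/4) / u)) := by
    refine norm_integral_le_of_norm_le ((kernel_integrable hr hc).const_mul M) ?_
    filter_upwards [ae_restrict_mem measurableSet_Ioi] with u hu
    rw [norm_smul, Real.norm_eq_abs, abs_of_nonneg (kernel_nonneg hu)]
    calc (u ^ r * Real.exp (-(t^2/4)/u)) * ‖T' u‖ ≤ (u ^ r * Real.exp (-(t^2/4)/u)) * M :=
          mul_le_mul_of_nonneg_left (hM u hu) (kernel_nonneg hu)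
      _ = M * (u ^ r * Real.exp (-(t^2/4)/u)) := mul_comm _ _
  rw [integral_const_mul, kernel_integral_scaling hr ht] at hbd
  calc ‖Gfam T' r t‖ ≤ M * (t ^ (2*r+2) * Cc r) := hbd
    _ = M * Cc r * t ^ (2*r+2) := by ring

end Vec

section Deriv

variable {X : Type*} [NormedAddCommGroup X] [NormedSpace ℝ X] [CompleteSpace X]
variable {T' : ℝ → X} {M : ℝ}

lemma Gfam_hasDerivAt (hT : ContinuousOn T' (Ioi (0:ℝ)))
    (hM : ∀ u ∈ Ioi (0:ℝ), ‖T' u‖ ≤ M) (hM0 : 0 ≤ M)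
    {r : ℝ} (hr : r < -1) {t : ℝ} (ht : 0 < t) :
    HasDerivAt (Gfam T' r) ((-(t/2)) • Gfam T' (r-1) t) t := by
  have hr1 : r - 1 < -1 := by linarith
  have hc : (0:ℝ) < t^2/4 := by positivity
  have hc16 : (0:ℝ) < t^2/16 := by positivity
  set F : ℝ → ℝ → X := fun x u => (u ^ r * Real.exp (-(x^2/4) / u)) • T' u with hF
  set F' : ℝ → ℝ → X := fun x u => ((u ^ (r-1) * Real.exp (-(x^2/4) / u)) * (-(x/2))) • T' u
    with hF'
  have key := hasDerivAt_integral_of_dominated_loc_of_deriv_le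
    (μ := volume.restrict (Ioi (0:ℝ))) (F := F) (F' := F') (x₀ := t)
    (bound := fun u => (u ^ (r-1) * Real.exp (-(t^2/16) / u)) * (3*t/4 * M))
    (Metric.ball_mem_nhds t (half_pos ht))
    (Filter.Eventually.of_forall fun x =>
      ((vec_contOn hT).aestronglyMeasurable measurableSet_Ioi))
    (vec_integrable hT hM hr hc)
    (((kernel_contOn.mul continuousOn_const).smul hT).aestronglyMeasurable measurableSet_Ioi)
    ?_ (((kernel_integrable hr1 hc16).mul_const _)) ?_
  · -- massage the conclusion
    have h2 : (∫ u in Ioi (0:ℝ), F' t u) = (-(t/2)) • Gfam T' (r-1) t := by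
      rw [Gfam, ← integral_smul]
      refine integral_congr_ae (Filter.Eventually.of_forall fun u => ?_)
      show (u ^ (r-1) * Real.exp (-(t^2/4) / u) * -(t/2)) • T' u
          = -(t/2) • (u ^ (r-1) * Real.exp (-(t^2/4) / u)) • T' u
      rw [smul_smul]; ring_nf
    have h3 := key.2
    rw [h2] at h3
    exact h3
  · -- bound
    filter_upwards [ae_restrict_mem measurableSet_Ioi] with u hu
    intro x hx
    have hu0 : (0:ℝ) < u := hu
    have hxt : |x - t| < t/2 := by
      have h := mem_ball_iff_norm.mp hx; rwa [Real.norm_eq_abs] at h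
    obtain ⟨hl, hr'⟩ := abs_lt.mp hxt
    have hx0 : (0:ℝ) < x := by linarith
    show ‖(u ^ (r-1) * Real.exp (-(x^2/4) / u) * -(x/2)) • T' u‖ ≤ _
    rw [norm_smul, Real.norm_eq_abs]
    have habs : |u ^ (r-1) * Real.exp (-(x^2/4)/u) * -(x/2)|
        = u ^ (r-1) * Real.exp (-(x^2/4)/u) * (x/2) := by
      rw [abs_mul, abs_mul, abs_neg, abs_of_nonneg (Real.rpow_nonneg hu0.le _),
        abs_of_nonneg (Real.exp_nonneg _), abs_of_nonneg (by linarith : (0:ℝ) ≤ x/2)]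
    rw [habs]
    have hexp : Real.exp (-(x^2/4)/u) ≤ Real.exp (-(t^2/16)/u) := by
      apply Real.exp_le_exp.mpr
      rw [div_eq_mul_inv, div_eq_mul_inv]
      apply mul_le_mul_of_nonneg_right _ (inv_nonneg.mpr hu0.le)
      nlinarith
    have s1 : u ^ (r-1) * Real.exp (-(x^2/4)/u) ≤ u ^ (r-1) * Real.exp (-(t^2/16)/u) :=
      mul_le_mul_of_nonneg_left hexp (Real.rpow_nonneg hu0.le _)
    have e0 : (0:ℝ) ≤ u ^ (r-1) * Real.exp (-(t^2/16)/u) :=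
      mul_nonneg (Real.rpow_nonneg hu0.le _) (Real.exp_nonneg _)
    have s2 : x/2 * ‖T' u‖ ≤ (3*t/4) * M :=
      mul_le_mul (by linarith) (hM u hu) (norm_nonneg _) (by linarith)
    calc u ^ (r-1) * Real.exp (-(x^2/4)/u) * (x/2) * ‖T' u‖
        = (u ^ (r-1) * Real.exp (-(x^2/4)/u)) * (x/2 * ‖T' u‖) := by ring
      _ ≤ (u ^ (r-1) * Real.exp (-(t^2/16)/u)) * (x/2 * ‖T' u‖) :=
          mul_le_mul_of_nonneg_right s1 (mul_nonneg (by linarith) (norm_nonneg _))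
      _ ≤ (u ^ (r-1) * Real.exp (-(t^2/16)/u)) * ((3*t/4) * M) :=
          mul_le_mul_of_nonneg_left s2 e0
      _ = u ^ (r-1) * Real.exp (-(t^2/16)/u) * (3*t/4*M) := by ring
  · -- differentiability
    filter_upwards [ae_restrict_mem measurableSet_Ioi] with u hu
    intro x hx
    have hu0 : (0:ℝ) < u := hu
    have hder : HasDerivAt (fun x : ℝ => (u ^ r * Real.exp (-(x^2/4) / u)) • T' u)
        ((u ^ r * (Real.exp (-(x^2/4) / u) * (-(2*x^(1:ℕ)/4) / u))) • T' u) x := by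
      exact ((((hasDerivAt_pow 2 x).div_const 4).neg.div_const u).exp.const_mul
        (u ^ r)).smul_const (T' u)
    convert hder using 2
    have hru : u ^ (r-1) = u ^ r / u := by
      rw [Real.rpow_sub hu0, Real.rpow_one]
    rw [hru]
    field_simp
    ring

end Deriv

section Lists

variable {X : Type*} [NormedAddCommGroup X] [NormedSpace ℝ X] [CompleteSpace X]
variable {T' : ℝ → X} {M : ℝ}

noncomputable def termF (T' : ℝ → X) (p : ℝ × ℕ × ℝ) (t : ℝ) : X :=
  (p.1 * t ^ p.2.1) • Gfam T' p.2.2 t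

noncomputable def sumF (T' : ℝ → X) (L : List (ℝ × ℕ × ℝ)) (t : ℝ) : X :=
  (L.map (fun p => termF T' p t)).sum

noncomputable def dStep (p : ℝ × ℕ × ℝ) : List (ℝ × ℕ × ℝ) :=
  [(p.1 * p.2.1, p.2.1 - 1, p.2.2), (-(p.1/2), p.2.1 + 1, p.2.2 - 1)]

noncomputable def dList (L : List (ℝ × ℕ × ℝ)) : List (ℝ × ℕ × ℝ) := L.flatMap dStep

def okL (L : List (ℝ × ℕ × ℝ)) : Prop := ∀ p ∈ L, p.2.2 < -1

lemma okL_dList {L : List (ℝ × ℕ × ℝ)} (h : okL L) : okL (dList L) := by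
  intro p hp
  rw [dList, List.mem_flatMap] at hp
  obtain ⟨q, hq, hpq⟩ := hp
  have hq2 := h q hq
  rw [dStep] at hpq
  rcases List.mem_pair.mp hpq with rfl | rfl
  · exact hq2
  · show q.2.2 - 1 < -1; linarith

lemma sumF_nil (t : ℝ) : sumF T' [] t = 0 := rfl

lemma sumF_cons (p : ℝ × ℕ × ℝ) (L : List (ℝ × ℕ × ℝ)) (t : ℝ) :
    sumF T' (p :: L) t = termF T' p t + sumF T' L t := by
  simp [sumF]

lemma sumF_append (L1 L2 : List (ℝ × ℕ × ℝ)) (t : ℝ) :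
    sumF T' (L1 ++ L2) t = sumF T' L1 t + sumF T' L2 t := by
  simp [sumF]

lemma hasDerivAt_sumF (hT : ContinuousOn T' (Ioi (0:ℝ)))
    (hM : ∀ u ∈ Ioi (0:ℝ), ‖T' u‖ ≤ M) (hM0 : 0 ≤ M)
    {L : List (ℝ × ℕ × ℝ)} (hok : okL L) {t : ℝ} (ht : 0 < t) :
    HasDerivAt (sumF T' L) (sumF T' (dList L) t) t := by
  induction L with
  | nil =>
    have : sumF T' ([] : List (ℝ × ℕ × ℝ)) = fun _ : ℝ => (0:X) := rfl
    rw [this]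
    simpa [dList, sumF] using hasDerivAt_const t (0:X)
  | cons p L ih =>
    have hokL : okL L := fun q hq => hok q (List.mem_cons_of_mem _ hq)
    have hokp : p.2.2 < -1 := hok p List.mem_cons_self
    obtain ⟨c, a, r⟩ := p
    have hokp' : r < -1 := hokp
    have hterm : HasDerivAt (fun s : ℝ => (c * s ^ a) • Gfam T' r s)
        ((c * t ^ a) • ((-(t/2)) • Gfam T' (r-1) t)
          + (c * (a * t ^ (a-1))) • Gfam T' r t) t :=
      ((hasDerivAt_pow a t).const_mul c).smul (Gfam_hasDerivAt hT hM hM0 hokp' ht)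
    have hLd := ih hokL
    have hsum := hterm.add hLd
    have heqf : (fun s : ℝ => (c * s ^ a) • Gfam T' r s + sumF T' L s)
        = sumF T' ((c, a, r) :: L) := by
      funext s; rw [sumF_cons]; rfl
    change HasDerivAt (fun s : ℝ => (c * s ^ a) • Gfam T' r s + sumF T' L s) _ t at hsum
    rw [heqf] at hsum
    have heqd : (c * t ^ a) • ((-(t/2)) • Gfam T' (r-1) t)
          + (c * (a * t ^ (a-1))) • Gfam T' r t + sumF T' (dList L) t
        = sumF T' (dList ((c, a, r) :: L)) t := by
      have h1 : dList ((c, a, r) :: L) = dStep (c, a, r) ++ dList L := rfl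
      rw [h1, sumF_append]
      congr 1
      show _ = termF T' (c * a, a-1, r) t + (termF T' (-(c/2), a+1, r-1) t + 0)
      rw [add_zero, termF, termF, add_comm]
      congr 1
      · simp only; congr 1; push_cast; ring
      · rw [smul_smul]
        congr 1
        simp only
        ring
    rw [heqd] at hsum
    exact hsum

end Lists

section Lists2

variable {X : Type*} [NormedAddCommGroup X] [NormedSpace ℝ X] [CompleteSpace X]
variable {T' : ℝ → X} {M : ℝ}

def wtL (n : ℕ) (L : List (ℝ × ℕ × ℝ)) : Prop :=
  ∀ p ∈ L, p.1 = 0 ∨ (p.2.1 : ℝ) + 2 * p.2.2 + 2 = -(n:ℝ)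

lemma wtL_dList {n : ℕ} {L : List (ℝ × ℕ × ℝ)} (h : wtL n L) : wtL (n+1) (dList L) := by
  intro p hp
  rw [dList, List.mem_flatMap] at hp
  obtain ⟨q, hq, hpq⟩ := hp
  have hq2 := h q hq
  rw [dStep] at hpq
  rcases hq2 with hc0 | hwq
  · rcases List.mem_pair.mp hpq with rfl | rfl
    · left; dsimp only; rw [hc0]; ring
    · left; dsimp only; rw [hc0]; ring
  · rcases List.mem_pair.mp hpq with rfl | rfl
    · by_cases ha : q.2.1 = 0
      · left; dsimp only; rw [ha]; simp
      · right; dsimp only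
        rw [Nat.cast_sub (Nat.one_le_iff_ne_zero.mpr ha)]
        push_cast
        linarith
    · right; dsimp only
      push_cast
      linarith

/-- the total coefficient of a list. -/
noncomputable def coefL (L : List (ℝ × ℕ × ℝ)) : ℝ :=
  (L.map (fun p => |p.1| * Cc p.2.2)).sum

lemma coefL_nonneg (L : List (ℝ × ℕ × ℝ)) : 0 ≤ coefL L := by
  apply List.sum_nonneg
  intro x hx
  rw [List.mem_map] at hx
  obtain ⟨p, _, rfl⟩ := hx
  exact mul_nonneg (abs_nonneg _) (Cc_nonneg _)

lemma sumF_norm_le (hT : ContinuousOn T' (Ioi (0:ℝ)))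
    (hM : ∀ u ∈ Ioi (0:ℝ), ‖T' u‖ ≤ M) (hM0 : 0 ≤ M)
    {n : ℕ} {L : List (ℝ × ℕ × ℝ)} (hok : okL L) (hwt : wtL n L) {t : ℝ} (ht : 0 < t) :
    ‖sumF T' L t‖ ≤ coefL L * (M * t ^ (-(n:ℝ))) := by
  induction L with
  | nil => simp [sumF_nil, coefL]
  | cons p L ih =>
    have hokL : okL L := fun q hq => hok q (List.mem_cons_of_mem _ hq)
    have hwtL : wtL n L := fun q hq => hwt q (List.mem_cons_of_mem _ hq)
    have hokp : p.2.2 < -1 := hok p List.mem_cons_self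
    have hwtp := hwt p List.mem_cons_self
    rw [sumF_cons]
    have hcoef : coefL (p :: L) = |p.1| * Cc p.2.2 + coefL L := by simp [coefL]
    rw [hcoef, add_mul]
    refine le_trans (norm_add_le _ _) (add_le_add ?_ (ih hokL hwtL))
    rcases hwtp with hc0 | hwtp
    · rw [termF, hc0]
      simp only [zero_mul, zero_smul, norm_zero, abs_zero]
      positivity
    -- term bound
    rw [termF, norm_smul, Real.norm_eq_abs, abs_mul, abs_of_nonneg (pow_nonneg ht.le _)]
    have hG := Gfam_norm_le hT hM hM0 hokp ht
    calc |p.1| * t ^ p.2.1 * ‖Gfam T' p.2.2 t‖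
        ≤ |p.1| * t ^ p.2.1 * (M * Cc p.2.2 * t ^ (2 * p.2.2 + 2)) := by
          refine mul_le_mul_of_nonneg_left hG ?_
          positivity
      _ = |p.1| * Cc p.2.2 * (M * (t ^ (p.2.1 : ℕ) * t ^ (2 * p.2.2 + 2))) := by ring
      _ = |p.1| * Cc p.2.2 * (M * t ^ (-(n:ℝ))) := by
          congr 2
          rw [← Real.rpow_natCast t p.2.1, ← Real.rpow_add ht, ← hwtp]
          congr 1
          ring

end Lists2

section Main

variable {X : Type*} [NormedAddCommGroup X] [NormedSpace ℝ X] [CompleteSpace X]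
variable {T' : ℝ → X} {M : ℝ}

noncomputable def L0 : List (ℝ × ℕ × ℝ) := [(1/(2*Real.sqrt Real.pi), 1, -(3:ℝ)/2)]

lemma okL_L0 : okL L0 := by
  intro p hp
  rw [L0, List.mem_singleton] at hp
  subst hp
  norm_num

lemma wtL_L0 : wtL 0 L0 := by
  intro p hp
  rw [L0, List.mem_singleton] at hp
  subst hp
  right
  norm_num

lemma okL_iter (n : ℕ) : okL (dList^[n] L0) := by
  induction n with
  | zero => exact okL_L0
  | succ n ih => rw [Function.iterate_succ_apply']; exact okL_dList ih

lemma wtL_iter (n : ℕ) : wtL n (dList^[n] L0) := by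
  induction n with
  | zero => exact wtL_L0
  | succ n ih => rw [Function.iterate_succ_apply']; exact wtL_dList ih

lemma subPoisson_eq_sumF (t : ℝ) : subPoisson T' t = sumF T' L0 t := by
  have h : sumF T' L0 t = termF T' (1/(2*Real.sqrt Real.pi), 1, -(3:ℝ)/2) t := by
    simp [sumF, L0]
  rw [h, termF, subPoisson]
  have h2 : (∫ u in Ioi (0:ℝ), (u ^ (-(3:ℝ)/2) * Real.exp (-t ^ 2 / (4 * u))) • T' u)
      = Gfam T' (-(3:ℝ)/2) t := by
    rw [Gfam]
    refine integral_congr_ae (Filter.Eventually.of_forall fun u => ?_)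
    congr 2
    ring
  rw [h2]
  congr 1
  dsimp only
  ring

lemma iteratedDeriv_subPoisson_eq (hT : ContinuousOn T' (Ioi (0:ℝ)))
    (hM : ∀ u ∈ Ioi (0:ℝ), ‖T' u‖ ≤ M) (hM0 : 0 ≤ M) (n : ℕ) :
    ∀ t ∈ Ioi (0:ℝ), iteratedDeriv n (subPoisson T') t = sumF T' (dList^[n] L0) t := by
  induction n with
  | zero =>
    intro t _
    rw [iteratedDeriv_zero, Function.iterate_zero_apply]
    exact subPoisson_eq_sumF t
  | succ n ih =>
    intro t ht
    have hev : iteratedDeriv n (subPoisson T') =ᶠ[nhds t] sumF T' (dList^[n] L0) :=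
      Filter.eventuallyEq_of_mem (Ioi_mem_nhds ht) (fun s hs => ih s hs)
    rw [iteratedDeriv_succ, hev.deriv_eq,
      (hasDerivAt_sumF hT hM hM0 (okL_iter n) ht).deriv, Function.iterate_succ_apply']

lemma contDiffOn_sumF (hT : ContinuousOn T' (Ioi (0:ℝ)))
    (hM : ∀ u ∈ Ioi (0:ℝ), ‖T' u‖ ≤ M) (hM0 : 0 ≤ M) :
    ∀ (n : ℕ) (L : List (ℝ × ℕ × ℝ)), okL L → ContDiffOn ℝ n (sumF T' L) (Ioi (0:ℝ)) := by
  intro n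
  induction n with
  | zero =>
    intro L hok
    rw [Nat.cast_zero, contDiffOn_zero]
    have hdiff : DifferentiableOn ℝ (sumF T' L) (Ioi (0:ℝ)) := fun t ht =>
      ((hasDerivAt_sumF hT hM hM0 hok ht).differentiableAt).differentiableWithinAt
    exact hdiff.continuousOn
  | succ n ih =>
    intro L hok
    have hcast : ((n+1 : ℕ) : WithTop ℕ∞) = (n : WithTop ℕ∞) + 1 := by norm_cast
    rw [hcast, contDiffOn_succ_iff_deriv_of_isOpen isOpen_Ioi]
    refine ⟨fun t ht =>
      ((hasDerivAt_sumF hT hM hM0 hok ht).differentiableAt).differentiableWithinAt, ?_, ?_⟩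
    · intro h; exact absurd h (by simp)
    · refine (ih (dList L) (okL_dList hok)).congr fun t ht => ?_
      exact (hasDerivAt_sumF hT hM hM0 hok ht).deriv

end Main

section Analytic

variable {X : Type*} [NormedAddCommGroup X] [NormedSpace ℂ X] [CompleteSpace X]
variable {T' : ℝ → X} {M : ℝ}

/-- complex extension of the subordinated Poisson integral. -/
noncomputable def Hc (T' : ℝ → X) (z : ℂ) : X :=
  (z / (2 * (Real.sqrt Real.pi : ℂ))) •
    ∫ u in Ioi (0:ℝ), (((u ^ (-(3:ℝ)/2) : ℝ) : ℂ) * Complex.exp (-z^2 / (4*(u:ℂ)))) • T' u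

lemma subPoisson_eq_Hc (s : ℝ) : subPoisson T' s = Hc T' (s : ℂ) := by
  rw [subPoisson, Hc]
  have hint : (∫ u in Ioi (0:ℝ),
        (((u ^ (-(3:ℝ)/2) : ℝ) : ℂ) * Complex.exp (-(s:ℂ)^2 / (4*(u:ℂ)))) • T' u)
      = ∫ u in Ioi (0:ℝ), (u ^ (-(3:ℝ)/2) * Real.exp (-s ^ 2 / (4 * u))) • T' u := by
    refine integral_congr_ae (Filter.Eventually.of_forall fun u => ?_)
    show (((u ^ (-(3:ℝ)/2) : ℝ) : ℂ) * Complex.exp (-(s:ℂ)^2 / (4*(u:ℂ)))) • T' u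
        = (u ^ (-(3:ℝ)/2) * Real.exp (-s ^ 2 / (4 * u))) • T' u
    have h1 : -(s:ℂ)^2 / (4*(u:ℂ)) = ((-s^2/(4*u) : ℝ) : ℂ) := by push_cast; ring
    rw [h1, ← Complex.ofReal_exp, ← Complex.ofReal_mul, Complex.coe_smul]
  rw [hint]
  have h2 : ((s:ℂ) / (2 * (Real.sqrt Real.pi : ℂ))) = ((s / (2 * Real.sqrt Real.pi) : ℝ) : ℂ) := by
    push_cast; ring
  rw [h2, Complex.coe_smul]

lemma ccont_aux {z : ℂ} :
    ContinuousOn (fun u : ℝ => Complex.exp (-z^2 / (4*(u:ℂ)))) (Ioi (0:ℝ)) := by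
  apply Complex.continuous_exp.comp_continuousOn
  refine continuousOn_const.div ((continuous_const.mul Complex.continuous_ofReal).continuousOn) ?_
  intro u hu
  have hu0 : (0:ℝ) < u := hu
  simp only [ne_eq, mul_eq_zero, not_or]
  constructor
  · norm_num
  · exact_mod_cast hu0.ne'

lemma ccont_coe (r : ℝ) : ContinuousOn (fun u : ℝ => ((u ^ r : ℝ) : ℂ)) (Ioi (0:ℝ)) :=
  Complex.continuous_ofReal.comp_continuousOn
    (fun u hu => (Real.continuousAt_rpow_const u _ (Or.inl (ne_of_gt hu))).continuousWithinAt)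

lemma ccont_den : ContinuousOn (fun u : ℝ => (4*(u:ℂ))) (Ioi (0:ℝ)) :=
  (continuous_const.mul Complex.continuous_ofReal).continuousOn

lemma ccont_den_ne : ∀ u ∈ Ioi (0:ℝ), (4*(u:ℂ)) ≠ 0 := by
  intro u hu
  have hu0 : (0:ℝ) < u := hu
  simp only [ne_eq, mul_eq_zero, not_or]
  exact ⟨by norm_num, by exact_mod_cast hu0.ne'⟩

lemma cmeas_of_cont (hT : ContinuousOn T' (Ioi (0:ℝ))) {g : ℝ → ℂ}
    (hg : ContinuousOn g (Ioi (0:ℝ))) :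
    AEStronglyMeasurable (fun u : ℝ => g u • T' u) (volume.restrict (Ioi (0:ℝ))) :=
  (hg.smul hT).aestronglyMeasurable measurableSet_Ioi

end Analytic

section Analytic2

variable {X : Type*} [NormedAddCommGroup X] [NormedSpace ℂ X] [CompleteSpace X]
variable {T' : ℝ → X} {M : ℝ}

lemma cnorm_eq (z : ℂ) {u : ℝ} (hu : 0 < u) (r : ℝ) :
    ‖(((u ^ r : ℝ) : ℂ) * Complex.exp (-z^2 / (4*(u:ℂ)))) • T' u‖
      = u ^ r * Real.exp (-(z^2).re / (4*u)) * ‖T' u‖ := by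
  rw [norm_smul, norm_mul, Complex.norm_real, Real.norm_eq_abs,
    abs_of_nonneg (Real.rpow_nonneg hu.le r), Complex.norm_exp]
  have h4 : (4*(u:ℂ)) = ((4*u : ℝ) : ℂ) := by push_cast; ring
  rw [h4, Complex.div_ofReal_re, Complex.neg_re]

lemma cintegrable (hT : ContinuousOn T' (Ioi (0:ℝ)))
    (hM : ∀ u ∈ Ioi (0:ℝ), ‖T' u‖ ≤ M) {z : ℂ} (hz : 0 < (z^2).re) {r : ℝ} (hr : r < -1) :
    IntegrableOn (fun u : ℝ => (((u ^ r : ℝ) : ℂ) * Complex.exp (-z^2/(4*(u:ℂ)))) • T' u)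
      (Ioi (0:ℝ)) := by
  have hc : 0 < (z^2).re/4 := by positivity
  refine ((kernel_integrable hr hc).const_mul M).mono'
    (cmeas_of_cont hT ((ccont_coe r).mul ccont_aux)) ?_
  filter_upwards [ae_restrict_mem measurableSet_Ioi] with u hu
  have hu0 : (0:ℝ) < u := hu
  rw [cnorm_eq z hu0 r]
  have harg : -(z^2).re / (4*u) = -((z^2).re/4) / u := by ring
  rw [harg]
  calc u ^ r * Real.exp (-((z^2).re/4)/u) * ‖T' u‖
      ≤ u ^ r * Real.exp (-((z^2).re/4)/u) * M :=
        mul_le_mul_of_nonneg_left (hM u hu) (kernel_nonneg hu0)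
    _ = M * (u ^ r * Real.exp (-((z^2).re/4)/u)) := by ring

end Analytic2

section Analytic3

variable {X : Type*} [NormedAddCommGroup X] [NormedSpace ℂ X] [CompleteSpace X]
variable {T' : ℝ → X} {M : ℝ}

lemma Hint_hasDerivAt (hT : ContinuousOn T' (Ioi (0:ℝ)))
    (hM : ∀ u ∈ Ioi (0:ℝ), ‖T' u‖ ≤ M) (hM0 : 0 ≤ M)
    {z₀ : ℂ} (hz₀ : |z₀.im| < z₀.re) :
    ∃ w : X, HasDerivAt (fun z : ℂ =>
      ∫ u in Ioi (0:ℝ), (((u ^ (-(3:ℝ)/2) : ℝ) : ℂ) * Complex.exp (-z^2/(4*(u:ℂ)))) • T' u)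
      w z₀ := by
  set r : ℝ := -(3:ℝ)/2 with hrdef
  have hr : r < -1 := by rw [hrdef]; norm_num
  have hr1 : r - 1 < -1 := by linarith
  have him0 : (0:ℝ) ≤ |z₀.im| := abs_nonneg _
  have hz₀re : 0 < z₀.re := lt_of_le_of_lt him0 hz₀
  set d : ℝ := (z₀.re - |z₀.im|)/2 with hddef
  have hd0 : 0 < d := by rw [hddef]; linarith
  have hdle : d ≤ z₀.re/2 := by rw [hddef]; linarith
  set ε : ℝ := d/2 with hεdef
  have hε : 0 < ε := half_pos hd0
  have hεz : ε < z₀.re := by rw [hεdef]; linarith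
  set δ : ℝ := d * (z₀.re - ε) with hδdef
  have hδ0 : 0 < δ := mul_pos hd0 (by linarith)
  set R : ℝ := ‖z₀‖ + ε with hRdef
  have hkey : ∀ z ∈ Metric.ball z₀ ε, δ ≤ (z^2).re ∧ ‖z‖ ≤ R := by
    intro z hz
    have h1 : ‖z - z₀‖ < ε := mem_ball_iff_norm.mp hz
    have hre : |(z - z₀).re| ≤ ‖z - z₀‖ := Complex.abs_re_le_norm _
    have him : |(z - z₀).im| ≤ ‖z - z₀‖ := Complex.abs_im_le_norm _
    rw [Complex.sub_re] at hre
    rw [Complex.sub_im] at him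
    have h2 := abs_lt.mp (lt_of_le_of_lt hre h1)
    have h4 : |z.im| ≤ |z₀.im| + ε := by
      have h5 := abs_sub_abs_le_abs_sub z.im z₀.im
      have h6 : |z.im - z₀.im| ≤ ε := le_of_lt (lt_of_le_of_lt him h1)
      linarith
    have h6 : z₀.re - ε ≤ z.re := by linarith [h2.1]
    have h7 : d ≤ z.re - |z.im| := by
      have h8 : z₀.re - |z₀.im| = 2*d := by rw [hddef]; ring
      have h9 : ε = d/2 := hεdef
      linarith
    constructor
    · have hsq : (z^2).re = z.re*z.re - z.im*z.im := by rw [sq, Complex.mul_re]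
      have habs : |z.im| * |z.im| = z.im*z.im := abs_mul_abs_self _
      have him1 : (0:ℝ) ≤ |z.im| := abs_nonneg _
      rw [hδdef, hsq]
      nlinarith
    · have : ‖z‖ ≤ ‖z₀‖ + ‖z - z₀‖ := by
        calc ‖z‖ = ‖z₀ + (z - z₀)‖ := by ring_nf
          _ ≤ ‖z₀‖ + ‖z - z₀‖ := norm_add_le _ _
      rw [hRdef]; linarith
  have hz₀sq : 0 < (z₀^2).re :=
    lt_of_lt_of_le hδ0 (hkey z₀ (Metric.mem_ball_self hε)).1
  have key := hasDerivAt_integral_of_dominated_loc_of_deriv_le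
    (μ := volume.restrict (Ioi (0:ℝ)))
    (F := fun z u => (((u ^ r : ℝ) : ℂ) * Complex.exp (-z^2/(4*(u:ℂ)))) • T' u)
    (F' := fun z u =>
      (((u ^ r : ℝ) : ℂ) * (Complex.exp (-z^2/(4*(u:ℂ))) * (-(2*z)/(4*(u:ℂ))))) • T' u)
    (x₀ := z₀)
    (bound := fun u => (u ^ (r-1) * Real.exp (-(δ/4)/u)) * (R/2 * M))
    (Metric.ball_mem_nhds z₀ hε)
    (Filter.Eventually.of_forall fun z => cmeas_of_cont hT ((ccont_coe r).mul ccont_aux))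
    (cintegrable hT hM hz₀sq hr)
    (cmeas_of_cont hT ((ccont_coe r).mul
      (ccont_aux.mul (continuousOn_const.div ccont_den ccont_den_ne))))
    ?_ ((kernel_integrable hr1 (by positivity)).mul_const _) ?_
  · exact ⟨_, key.2⟩
  · -- the uniform bound on the ball
    filter_upwards [ae_restrict_mem measurableSet_Ioi] with u hu
    intro z hz
    have hu0 : (0:ℝ) < u := hu
    obtain ⟨hδz, hRz⟩ := hkey z hz
    have hq : ‖(-(2*z)/(4*(u:ℂ)))‖ = ‖z‖/(2*u) := by
      rw [norm_div, norm_neg, norm_mul]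
      have h41 : ‖(4*(u:ℂ))‖ = 4*u := by
        rw [norm_mul, Complex.norm_real, Real.norm_eq_abs, abs_of_nonneg hu0.le]
        norm_num
      have h21 : ‖(2:ℂ)‖ = 2 := by norm_num
      rw [h41, h21]
      field_simp
      ring
    have hre4 : ((-z^2/(4*(u:ℂ))).re) = -(z^2).re/(4*u) := by
      have h4 : (4*(u:ℂ)) = ((4*u:ℝ):ℂ) := by push_cast; ring
      rw [h4, Complex.div_ofReal_re, Complex.neg_re]
    have hE : Real.exp ((-z^2/(4*(u:ℂ))).re) ≤ Real.exp (-(δ/4)/u) := by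
      apply Real.exp_le_exp.mpr
      rw [hre4]
      have h9 : -(z^2).re/(4*u) ≤ -δ/(4*u) := by
        rw [div_eq_mul_inv, div_eq_mul_inv]
        exact mul_le_mul_of_nonneg_right (by linarith) (by positivity)
      have h10 : -δ/(4*u) = -(δ/4)/u := by ring
      linarith
    show ‖(((u ^ r : ℝ) : ℂ) * (Complex.exp (-z^2/(4*(u:ℂ))) * (-(2*z)/(4*(u:ℂ))))) • T' u‖ ≤ _
    rw [norm_smul, norm_mul, norm_mul, Complex.norm_real, Real.norm_eq_abs,
      abs_of_nonneg (Real.rpow_nonneg hu0.le _), hq, Complex.norm_exp]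
    have hEpos : (0:ℝ) ≤ Real.exp ((-z^2/(4*(u:ℂ))).re) := Real.exp_nonneg _
    have hzn : (0:ℝ) ≤ ‖z‖ := norm_nonneg _
    have hR0 : (0:ℝ) ≤ R := le_trans hzn hRz
    have hs1 : u ^ r * (Real.exp ((-z^2/(4*(u:ℂ))).re) * (‖z‖/(2*u))) * ‖T' u‖
        ≤ u ^ r * (Real.exp (-(δ/4)/u) * (R/(2*u))) * M := by
      have m1 : Real.exp ((-z^2/(4*(u:ℂ))).re) * (‖z‖/(2*u))
          ≤ Real.exp (-(δ/4)/u) * (R/(2*u)) := by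
        apply mul_le_mul hE ?_ (by positivity) (Real.exp_nonneg _)
        rw [div_eq_mul_inv, div_eq_mul_inv]
        exact mul_le_mul_of_nonneg_right hRz (by positivity)
      have m2 : u ^ r * (Real.exp ((-z^2/(4*(u:ℂ))).re) * (‖z‖/(2*u)))
          ≤ u ^ r * (Real.exp (-(δ/4)/u) * (R/(2*u))) :=
        mul_le_mul_of_nonneg_left m1 (Real.rpow_nonneg hu0.le _)
      apply mul_le_mul m2 (hM u hu) (norm_nonneg _)
      positivity
    have hfin : u ^ r * (Real.exp (-(δ/4)/u) * (R/(2*u))) * M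
        = (u ^ (r-1) * Real.exp (-(δ/4)/u)) * (R/2 * M) := by
      rw [Real.rpow_sub hu0, Real.rpow_one]
      field_simp
    rw [← hfin]
    exact hs1
  · -- differentiability of the integrand
    filter_upwards [ae_restrict_mem measurableSet_Ioi] with u hu
    intro z hz
    have hder := ((((hasDerivAt_pow 2 z).neg.div_const (4*(u:ℂ))).cexp).const_mul
      (((u ^ r : ℝ) : ℂ))).smul_const (T' u)
    convert hder using 2 <;> norm_num [Pi.neg_apply]

end Analytic3

section Analytic4

variable {X : Type*} [NormedAddCommGroup X] [NormedSpace ℂ X] [CompleteSpace X]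
variable {T' : ℝ → X} {M : ℝ}

lemma analyticOnNhd_subPoisson (hT : ContinuousOn T' (Ioi (0:ℝ)))
    (hM : ∀ u ∈ Ioi (0:ℝ), ‖T' u‖ ≤ M) (hM0 : 0 ≤ M) :
    AnalyticOnNhd ℝ (subPoisson T') (Ioi (0:ℝ)) := by
  set D : Set ℂ := {z : ℂ | |z.im| < z.re} with hD
  have hDopen : IsOpen D :=
    isOpen_lt (continuous_abs.comp Complex.continuous_im) Complex.continuous_re
  have hdiff : DifferentiableOn ℂ (Hc T') D := by
    intro z₀ hz₀
    obtain ⟨w, hw⟩ := Hint_hasDerivAt hT hM hM0 hz₀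
    have h1 : HasDerivAt (Hc T')
        ((z₀ / (2 * (Real.sqrt Real.pi : ℂ))) • w
          + (1/(2 * (Real.sqrt Real.pi : ℂ))) • (∫ u in Ioi (0:ℝ),
          (((u ^ (-(3:ℝ)/2) : ℝ) : ℂ) * Complex.exp (-z₀^2/(4*(u:ℂ)))) • T' u)) z₀ := by
      have h2 : HasDerivAt (fun z : ℂ => z / (2 * (Real.sqrt Real.pi : ℂ)))
          (1/(2 * (Real.sqrt Real.pi : ℂ))) z₀ := by
        simpa using (hasDerivAt_id z₀).div_const (2 * (Real.sqrt Real.pi : ℂ))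
      exact h2.smul hw
    exact h1.differentiableAt.differentiableWithinAt
  have hAn : AnalyticOnNhd ℂ (Hc T') D := hdiff.analyticOnNhd hDopen
  intro t ht
  have htD : ((t:ℂ)) ∈ D := by
    have ht0 : (0:ℝ) < t := ht
    simp only [hD, mem_setOf_eq, Complex.ofReal_im, Complex.ofReal_re, abs_zero]
    exact ht0
  have h1 : AnalyticAt ℝ (Hc T' ∘ Complex.ofReal) t :=
    ((hAn _ htD).restrictScalars).comp (Complex.ofRealCLM.analyticAt t)
  refine h1.congr ?_
  filter_upwards [Ioi_mem_nhds ht] with s _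
  exact (subPoisson_eq_Hc s).symm

lemma contDiffOn_omega_subPoisson (hT : ContinuousOn T' (Ioi (0:ℝ)))
    (hM : ∀ u ∈ Ioi (0:ℝ), ‖T' u‖ ≤ M) (hM0 : 0 ≤ M) :
    ContDiffOn ℝ (⊤ : ℕ∞) (subPoisson T') (Ioi (0:ℝ)) :=
  (analyticOnNhd_subPoisson hT hM hM0).contDiffOn_of_completeSpace

end Analytic4

/-- For every `f ∈ L^p_B(Ω)` the Bochner integral defining `P_t f` converges
for every `t > 0`, the map `t ↦ P_t f` is infinitely differentiable from `(0,∞)` into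
`L^p_B(Ω)`, and for every integer `m ≥ 1` there is a constant `C_m > 0` independent of `f`, `t`
and the family `(T_u)` such that `‖(d^m/dt^m) P_t f‖ ≤ C_m t^{−m} ‖f‖` for all `t > 0`. -/
theorem stmt_1 (m : ℕ) (hm : 1 ≤ m) :
    ∃ C : ℝ, 0 < C ∧
      ∀ (Ω : Type) [MeasurableSpace Ω] (μ : Measure Ω)
        (B : Type) [NormedAddCommGroup B] [NormedSpace ℂ B] [CompleteSpace B]
        (p : ℝ≥0∞) [Fact (1 ≤ p)]
        (T : ℝ → (Lp B p μ →L[ℂ] Lp B p μ)),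
        (∀ u ∈ Ioi (0 : ℝ), ‖T u‖ ≤ 1) →
        (∀ f : Lp B p μ, ContinuousOn (fun u => T u f) (Ioi (0 : ℝ))) →
        ∀ (f : Lp B p μ) (t : ℝ), 0 < t →
          IntegrableOn
            (fun u : ℝ => (u ^ (-(3 : ℝ) / 2) * Real.exp (-t ^ 2 / (4 * u))) • T u f)
            (Ioi 0) volume ∧
          ContDiffOn ℝ (⊤ : ℕ∞) (subPoisson fun u => T u f) (Ioi 0) ∧
          ‖iteratedDeriv m (subPoisson fun u => T u f) t‖ ≤ C * t ^ (-(m : ℝ)) * ‖f‖ := by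
  refine ⟨coefL (dList^[m] L0) + 1, by linarith [coefL_nonneg (dList^[m] L0)], ?_⟩
  intro Ω _ μ B _ _ _ p _ T hTle hTcont f t ht
  set T' : ℝ → Lp B p μ := fun u => T u f with hT'def
  have hT : ContinuousOn T' (Ioi (0:ℝ)) := hTcont f
  have hM : ∀ u ∈ Ioi (0:ℝ), ‖T' u‖ ≤ ‖f‖ := by
    intro u hu
    calc ‖T u f‖ ≤ ‖T u‖ * ‖f‖ := (T u).le_opNorm f
      _ ≤ 1 * ‖f‖ := mul_le_mul_of_nonneg_right (hTle u hu) (norm_nonneg f)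
      _ = ‖f‖ := one_mul _
  have hM0 : (0:ℝ) ≤ ‖f‖ := norm_nonneg f
  refine ⟨?_, ?_, ?_⟩
  · -- integrability
    have heq : (fun u : ℝ => (u ^ (-(3:ℝ)/2) * Real.exp (-t ^ 2 / (4 * u))) • T' u)
        = fun u : ℝ => (u ^ (-(3:ℝ)/2) * Real.exp (-(t^2/4) / u)) • T' u := by
      funext u; congr 2; ring
    rw [heq]
    exact vec_integrable hT hM (by norm_num) (by positivity)
  · exact contDiffOn_omega_subPoisson hT hM hM0
  · have hiter := iteratedDeriv_subPoisson_eq hT hM hM0 m t ht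
    rw [hiter]
    have hbound := sumF_norm_le hT hM hM0 (okL_iter m) (wtL_iter m) ht
    have htm : (0:ℝ) ≤ t ^ (-(m:ℝ)) := Real.rpow_nonneg ht.le _
    calc ‖sumF T' (dList^[m] L0) t‖
        ≤ coefL (dList^[m] L0) * (‖f‖ * t ^ (-(m:ℝ))) := hbound
      _ ≤ (coefL (dList^[m] L0) + 1) * t ^ (-(m:ℝ)) * ‖f‖ := by
          nlinarith [mul_nonneg htm hM0, coefL_nonneg (dList^[m] L0)]
end

section
/- Let n ≥ 1 and 1 < r < ∞. There exists a constant C = C(n, r) > 0 such that for all t₁, t₂ > 0 and all x ∈ ℝⁿ, ( ∫₀^∞ ∫₀^∞ ( t₁ t₂ s₁ s₂ / (t₁ + t₂ + s₁ + s₂ + |x|)^{n+4} )^{r} ds₁/s₁ · ds₂/s₂ )^{1/r} ≤ C · t₁ t₂ / (t₁ + t₂ + |x|)^{n+2}. -/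
/-!
Write `A = t₁ + t₂ + |x|`. Since `(A + s₁ + s₂)^{n+4} ≥ A^n (A + s₁)^2 (A + s₂)^2`, the integrand is
dominated by a product, so the double integral is at most `(t₁t₂/A^n)^r` times the square of
`∫₀^∞ (s/(A+s)^2)^r ds/s`. Splitting that integral at `s = A` and comparing with `s^{r-1}/A^{2r}`
and `s^{-r-1}` bounds it by `2A^{-r}/r`, whence `C = (2/r)^{2/r}`.
-/

open MeasureTheory Set
open scoped ENNReal

section

variable {r a A : ℝ}

lemma lintegral_Ioc_rpow_div_add_sq_le (hr : 0 < r) (hA : 0 < A) :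
    ∫⁻ s in Ioc 0 A, ENNReal.ofReal ((s / (A + s) ^ 2) ^ r / s) ≤
      ENNReal.ofReal (A ^ (-r) / r) := by
  have hbound : ∀ s ∈ Ioc 0 A,
      ENNReal.ofReal ((s / (A + s) ^ 2) ^ r / s) ≤ ENNReal.ofReal (s ^ (r - 1) / A ^ (2 * r)) := by
    rintro s ⟨hs, -⟩
    apply ENNReal.ofReal_le_ofReal
    calc (s / (A + s) ^ 2) ^ r / s ≤ (s / A ^ 2) ^ r / s := by
          gcongr
          linarith
      _ = s ^ (r - 1) / A ^ (2 * r) := by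
          rw [Real.div_rpow hs.le (by positivity), ← Real.rpow_natCast_mul hA.le,
            Real.rpow_sub_one hs.ne']
          push_cast
          ring
  have hint : ∫ s in Ioc 0 A, s ^ (r - 1) / A ^ (2 * r) = A ^ (-r) / r := by
    rw [integral_div, ← intervalIntegral.integral_of_le hA.le,
      integral_rpow (Or.inl (by linarith)), sub_add_cancel, Real.zero_rpow hr.ne', sub_zero,
      div_right_comm, ← Real.rpow_sub hA]
    ring_nf
  calc _ ≤ ∫⁻ s in Ioc 0 A, ENNReal.ofReal (s ^ (r - 1) / A ^ (2 * r)) :=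
        setLIntegral_mono' measurableSet_Ioc hbound
    _ = ENNReal.ofReal (A ^ (-r) / r) := by
        rw [← hint, ofReal_integral_eq_lintegral_ofReal]
        · exact ((intervalIntegral.intervalIntegrable_rpow' (by linarith)).1).div_const _
        · exact ae_restrict_of_forall_mem measurableSet_Ioc fun s hs ↦ by
            have := hs.1
            positivity

lemma lintegral_Ioi_rpow_div_add_sq_le (hr : 0 < r) (hA : 0 < A) :
    ∫⁻ s in Ioi A, ENNReal.ofReal ((s / (A + s) ^ 2) ^ r / s) ≤
      ENNReal.ofReal (A ^ (-r) / r) := by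
  have hbound : ∀ s ∈ Ioi A,
      ENNReal.ofReal ((s / (A + s) ^ 2) ^ r / s) ≤ ENNReal.ofReal (s ^ (-r - 1)) := by
    intro s hs
    have hs0 : 0 < s := hA.trans hs
    apply ENNReal.ofReal_le_ofReal
    calc (s / (A + s) ^ 2) ^ r / s ≤ (s / s ^ 2) ^ r / s := by
          gcongr
          linarith
      _ = s ^ (-r - 1) := by
          rw [Real.rpow_sub_one hs0.ne', Real.rpow_neg hs0.le, ← Real.inv_rpow hs0.le]
          congr 2
          field_simp
  have hint : ∫ s in Ioi A, s ^ (-r - 1) = A ^ (-r) / r := by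
    rw [integral_Ioi_rpow_of_lt (by linarith) hA, sub_add_cancel, neg_div_neg_eq]
  calc _ ≤ ∫⁻ s in Ioi A, ENNReal.ofReal (s ^ (-r - 1)) :=
        setLIntegral_mono' measurableSet_Ioi hbound
    _ = ENNReal.ofReal (A ^ (-r) / r) := by
        rw [← hint, ofReal_integral_eq_lintegral_ofReal]
        · exact integrableOn_Ioi_rpow_of_lt (by linarith) hA
        · exact ae_restrict_of_forall_mem measurableSet_Ioi fun s hs ↦
            Real.rpow_nonneg (hA.trans hs).le _

lemma lintegral_rpow_div_add_sq_le (hr : 0 < r) (hA : 0 < A) :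
    ∫⁻ s in Ioi 0, ENNReal.ofReal ((s / (A + s) ^ 2) ^ r / s) ≤
      ENNReal.ofReal (2 * A ^ (-r) / r) := by
  rw [← Ioc_union_Ioi_eq_Ioi hA.le, lintegral_union measurableSet_Ioi (Ioc_disjoint_Ioi le_rfl),
    mul_div_assoc, two_mul, ENNReal.ofReal_add (by positivity) (by positivity)]
  exact add_le_add (lintegral_Ioc_rpow_div_add_sq_le hr hA)
    (lintegral_Ioi_rpow_div_add_sq_le hr hA)

lemma mul_mul_div_add_add_pow_le (n : ℕ) {s₁ s₂ : ℝ} (ha : 0 ≤ a) (hA : 0 < A)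
    (hs₁ : 0 ≤ s₁) (hs₂ : 0 ≤ s₂) :
    a * s₁ * s₂ / (A + s₁ + s₂) ^ (n + 4) ≤
      a / A ^ n * (s₁ / (A + s₁) ^ 2) * (s₂ / (A + s₂) ^ 2) := by
  have hden : A ^ n * (A + s₁) ^ 2 * (A + s₂) ^ 2 ≤ (A + s₁ + s₂) ^ (n + 4) :=
    calc A ^ n * (A + s₁) ^ 2 * (A + s₂) ^ 2
        ≤ (A + s₁ + s₂) ^ n * (A + s₁ + s₂) ^ 2 * (A + s₁ + s₂) ^ 2 := by
          gcongr ?_ ^ n * ?_ ^ 2 * ?_ ^ 2 <;> linarith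
      _ = (A + s₁ + s₂) ^ (n + 4) := by ring
  rw [div_mul_div_comm, div_mul_div_comm]
  exact div_le_div_of_nonneg_left (by positivity) (by positivity) hden

lemma lintegral_lintegral_rpow_le (n : ℕ) (hr : 0 < r) (ha : 0 ≤ a) (hA : 0 < A) :
    ∫⁻ s₁ in Ioi 0, ∫⁻ s₂ in Ioi 0,
        ENNReal.ofReal ((a * s₁ * s₂ / (A + s₁ + s₂) ^ (n + 4)) ^ r / (s₁ * s₂)) ≤
      ENNReal.ofReal (((2 / r) ^ (2 / r) * a / A ^ (n + 2)) ^ r) := by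
  set g : ℝ → ℝ≥0∞ := fun s ↦ ENNReal.ofReal ((s / (A + s) ^ 2) ^ r / s)
  set c : ℝ := (a / A ^ n) ^ r
  set m : ℝ := 2 * A ^ (-r) / r
  have hpt : ∀ s₁ ∈ Ioi (0 : ℝ), ∀ s₂ ∈ Ioi (0 : ℝ),
      ENNReal.ofReal ((a * s₁ * s₂ / (A + s₁ + s₂) ^ (n + 4)) ^ r / (s₁ * s₂)) ≤
        ENNReal.ofReal c * g s₁ * g s₂ := by
    intro s₁ (hs₁ : 0 < s₁) s₂ (hs₂ : 0 < s₂)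
    rw [← ENNReal.ofReal_mul (by positivity), ← ENNReal.ofReal_mul (by positivity)]
    apply ENNReal.ofReal_le_ofReal
    calc (a * s₁ * s₂ / (A + s₁ + s₂) ^ (n + 4)) ^ r / (s₁ * s₂)
        ≤ (a / A ^ n * (s₁ / (A + s₁) ^ 2) * (s₂ / (A + s₂) ^ 2)) ^ r / (s₁ * s₂) := by
          gcongr
          exact mul_mul_div_add_add_pow_le n ha hA hs₁.le hs₂.le
      _ = c * ((s₁ / (A + s₁) ^ 2) ^ r / s₁) * ((s₂ / (A + s₂) ^ 2) ^ r / s₂) := by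
          rw [Real.mul_rpow (by positivity) (by positivity),
            Real.mul_rpow (by positivity) (by positivity)]
          ring
  have hm : ∫⁻ s in Ioi 0, g s ≤ ENNReal.ofReal m := lintegral_rpow_div_add_sq_le hr hA
  have hcm : c * m * m = ((2 / r) ^ (2 / r) * a / A ^ (n + 2)) ^ r := by
    simp only [c, m]
    rw [mul_div_assoc ((2 / r) ^ (2 / r)), Real.mul_rpow (by positivity) (by positivity),
      ← Real.rpow_mul (by positivity), div_mul_cancel₀ _ hr.ne', Real.div_rpow ha (by positivity),
      Real.div_rpow ha (by positivity),
      pow_add, Real.mul_rpow (by positivity) (by positivity), ← Real.rpow_pow_comm hA.le r 2,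
      Real.rpow_neg hA.le, Real.rpow_two]
    have : 0 < A ^ r := by positivity
    field_simp
  calc _ ≤ ∫⁻ s₁ in Ioi 0, ∫⁻ s₂ in Ioi 0, ENNReal.ofReal c * g s₁ * g s₂ :=
        setLIntegral_mono' measurableSet_Ioi fun s₁ hs₁ ↦
          setLIntegral_mono' measurableSet_Ioi (hpt s₁ hs₁)
    _ = ENNReal.ofReal c * (∫⁻ s in Ioi 0, g s) * ∫⁻ s in Ioi 0, g s := by
        rw [lintegral_lintegral_mul (by fun_prop) (by fun_prop),
          lintegral_const_mul' _ _ ENNReal.ofReal_ne_top]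
    _ ≤ ENNReal.ofReal c * ENNReal.ofReal m * ENNReal.ofReal m := by gcongr
    _ = ENNReal.ofReal (((2 / r) ^ (2 / r) * a / A ^ (n + 2)) ^ r) := by
        rw [← ENNReal.ofReal_mul (by positivity), ← ENNReal.ofReal_mul (by positivity), hcm]

end

theorem stmt_16_general (n : ℕ) (r : ℝ) (hr : 1 < r) :
    ∃ C : ℝ, 0 < C ∧ ∀ t₁ t₂ : ℝ, 0 < t₁ → 0 < t₂ → ∀ x : EuclideanSpace ℝ (Fin n),
      (∫⁻ s₁ in Ioi (0 : ℝ), ∫⁻ s₂ in Ioi (0 : ℝ),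
          ENNReal.ofReal
            ((t₁ * t₂ * s₁ * s₂ / (t₁ + t₂ + s₁ + s₂ + ‖x‖) ^ (n + 4)) ^ r /
              (s₁ * s₂))) ^ (1 / r) ≤
        ENNReal.ofReal (C * (t₁ * t₂) / (t₁ + t₂ + ‖x‖) ^ (n + 2)) := by
  have hr₀ : 0 < r := zero_lt_one.trans hr
  refine ⟨(2 / r) ^ (2 / r), by positivity, fun t₁ t₂ ht₁ ht₂ x ↦ ?_⟩
  have hsum : ∀ s₁ s₂ : ℝ, t₁ + t₂ + s₁ + s₂ + ‖x‖ = t₁ + t₂ + ‖x‖ + s₁ + s₂ :=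
    fun _ _ ↦ by ring
  simp_rw [hsum, one_div, ENNReal.rpow_inv_le_iff hr₀]
  refine (lintegral_lintegral_rpow_le n hr₀ (by positivity) (by positivity)).trans_eq ?_
  exact (ENNReal.ofReal_rpow_of_nonneg (by positivity) hr₀.le).symm

/-- For `n ≥ 1` and `1 < r < ∞` there is `C = C(n,r) > 0` such that for all
`t₁, t₂ > 0` and all `x ∈ ℝⁿ`,
`(∫₀^∞∫₀^∞ (t₁t₂s₁s₂/(t₁+t₂+s₁+s₂+|x|)^{n+4})^r ds₁/s₁ ds₂/s₂)^{1/r}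
  ≤ C t₁t₂/(t₁+t₂+|x|)^{n+2}`. -/
theorem stmt_16 (n : ℕ) (hn : 1 ≤ n) (r : ℝ) (hr : 1 < r) :
    ∃ C : ℝ, 0 < C ∧ ∀ t₁ t₂ : ℝ, 0 < t₁ → 0 < t₂ → ∀ x : EuclideanSpace ℝ (Fin n),
      (∫⁻ s₁ in Ioi (0 : ℝ), ∫⁻ s₂ in Ioi (0 : ℝ),
          ENNReal.ofReal
            ((t₁ * t₂ * s₁ * s₂ / (t₁ + t₂ + s₁ + s₂ + ‖x‖) ^ (n + 4)) ^ r /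
              (s₁ * s₂))) ^ (1 / r) ≤
        ENNReal.ofReal (C * (t₁ * t₂) / (t₁ + t₂ + ‖x‖) ^ (n + 2)) :=
  stmt_16_general n r hr
end
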